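/- A pairwise (butterfly) summation over P = 2^n processors computes the full sum ∑_{l=0}^{P−1} x_l on every processor in exactly n = log₂ P rounds: if s⁰_l = x_l and s^{j+1}_l = s^j_l + s^j_{l XOR 2^j}, then s^n_l = ∑_{m=0}^{P−1} x_m for every l. -/

import Mathlib

/-!
After `j` rounds processor `l` holds `∑_{m < 2^j} x (l ^^^ m)`, the sum over all indices that
agree with `l` from bit `j` on: round `j` joins the block of `l` with the block of `l ^^^ 2^j`,
and since `2^j ^^^ m = 2^j + m` for `m < 2^j`, the two blocks together form the block of size
`2^(j+1)`. For `j = n` and `l < 2^n`, `m ↦ l ^^^ m` permutes `range (2^n)`.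
-/

open Finset

lemma Nat.two_pow_xor_eq_add_of_lt {i j : ℕ} (h : i < 2 ^ j) : 2 ^ j ^^^ i = 2 ^ j + i := by
  rw [Nat.add_comm, ← Nat.or_two_pow_eq_add_of_lt h, Nat.or_comm]
  apply Nat.eq_of_testBit_eq
  intro k
  simp only [Nat.testBit_xor, Nat.testBit_or, Nat.testBit_two_pow]
  by_cases hjk : j = k
  · subst hjk
    simp [Nat.testBit_lt_two_pow h]
  · simp [hjk]

lemma Finset.sum_range_two_pow_xor {M : Type*} [AddCommMonoid M] {n l : ℕ} (hl : l < 2 ^ n)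
    (f : ℕ → M) : ∑ m ∈ range (2 ^ n), f (l ^^^ m) = ∑ m ∈ range (2 ^ n), f m := by
  have maps_to {m : ℕ} (hm : m ∈ range (2 ^ n)) : l ^^^ m ∈ range (2 ^ n) :=
    mem_range.2 (Nat.xor_lt_two_pow hl (mem_range.1 hm))
  exact sum_nbij' (l ^^^ ·) (l ^^^ ·) (fun _ ↦ maps_to) (fun _ ↦ maps_to)
    (fun m _ ↦ Nat.xor_xor_cancel_left l m) (fun m _ ↦ Nat.xor_xor_cancel_left l m)
    (fun _ _ ↦ rfl)

lemma butterfly_eq_sum_range_xor {M : Type*} [AddCommMonoid M] {x : ℕ → M} {s : ℕ → ℕ → M}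
    (h0 : ∀ l, s 0 l = x l) (hstep : ∀ j l, s (j + 1) l = s j l + s j (l ^^^ 2 ^ j)) (j l : ℕ) :
    s j l = ∑ m ∈ range (2 ^ j), x (l ^^^ m) := by
  induction j generalizing l with
  | zero => simp [h0]
  | succ j ih =>
    rw [hstep, ih, ih, pow_succ, mul_two, sum_range_add]
    congr 1
    refine sum_congr rfl fun m hm ↦ ?_
    rw [Nat.xor_assoc, Nat.two_pow_xor_eq_add_of_lt (mem_range.1 hm)]

/-- Butterfly summation over P = 2ⁿ processors: with s⁰_l = x_l and
s^{j+1}_l = s^j_l + s^j_{l XOR 2^j}, every processor l < 2ⁿ holds the full sum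
after n rounds. -/
theorem stmt_14 {M : Type*} [AddCommMonoid M] (n : ℕ) (x : ℕ → M)
    (s : ℕ → ℕ → M)
    (h0 : ∀ l, s 0 l = x l)
    (hstep : ∀ j l, s (j + 1) l = s j l + s j (l ^^^ 2 ^ j)) :
    ∀ l < 2 ^ n, s n l = ∑ m ∈ Finset.range (2 ^ n), x m := by
  intro l hl
  rw [butterfly_eq_sum_range_xor h0 hstep, sum_range_two_pow_xor hl]
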